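/- arXiv:1603.05736 — 6 statements merged into one kernel-verified Lean document; each statement's English description precedes it below -/
import Mathlib

section
/- Let W : X → Y be a discrete memoryless channel with finite input alphabet X and finite output alphabet Y, and let X be uniformly distributed on X. For two output symbols y1, y2 ∈ Y, let W̃ be the channel on output alphabet Y \ {y1,y2} ∪ {y*} obtained by merging y1 and y2, i.e. W̃(y|x) = W(y|x) for y ∉ {y1,y2} and W̃(y*|x) = W(y1|x) + W(y2|x). Then 0 ≤ I(W) − I(W̃) ≤ (P_Y(y1) + P_Y(y2))/ln 2 · Σ_{x∈X} |P_W(x|y1) − P_W(x|y2)|, where I denotes the symmetric capacity (mutual information under uniform input), P_Y(y) = (1/|X|) Σ_x W(y|x), and P_W(x|y) = W(y|x)/Σ_{x0} W(y|x0). -/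
open Finset

noncomputable section

/-- Output marginal of a channel `W` (with `W x y = W(y|x)`) under uniform input. -/
def PY {X Y : Type*} [Fintype X] (W : X → Y → ℝ) (y : Y) : ℝ :=
  (∑ x : X, W x y) / (Fintype.card X : ℝ)

/-- Posterior distribution of the (uniform) input given output `y`. -/
def post {X Y : Type*} [Fintype X] (W : X → Y → ℝ) (y : Y) (x : X) : ℝ :=
  W x y / ∑ x0 : X, W x0 y

/-- Symmetric capacity: mutual information between a uniform input and the output. -/
def symCap {X Y : Type*} [Fintype X] [Fintype Y] (W : X → Y → ℝ) : ℝ :=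
  ∑ y : Y, ∑ x : X, (W x y / (Fintype.card X : ℝ)) *
    Real.logb 2 (W x y * (Fintype.card X : ℝ) / ∑ x0 : X, W x0 y)

private lemma one_sub_inv_le_log {t : ℝ} (ht : 0 < t) : 1 - 1/t ≤ Real.log t := by
  have h := Real.log_le_sub_one_of_pos (show (0:ℝ) < t⁻¹ by positivity)
  rw [Real.log_inv, inv_eq_one_div] at h
  linarith

private lemma key_edge {n Sa Sb b : ℝ} (hn : 0 < n) (hSa : 0 < Sa) (hSb : 0 < Sb)
    (hb : 0 ≤ b) :
    0 ≤ b * Real.log (b * n / Sb) - b * Real.log (b * n / (Sa + Sb)) ∧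
    b * Real.log (b * n / Sb) - b * Real.log (b * n / (Sa + Sb))
      ≤ (Sa + Sb) * (b / Sb) := by
  have hS : 0 < Sa + Sb := by linarith
  rcases hb.eq_or_lt with hb' | hb'
  · rw [← hb']; norm_num
  have h1 : Real.log (b * n / Sb) = Real.log b + Real.log n - Real.log Sb := by
    rw [Real.log_div (by positivity) (by positivity), Real.log_mul (by positivity) (by positivity)]
  have h2 : Real.log (b * n / (Sa + Sb)) = Real.log b + Real.log n - Real.log (Sa + Sb) := by
    rw [Real.log_div (by positivity) (by positivity), Real.log_mul (by positivity) (by positivity)]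
  have hid : b * Real.log (b * n / Sb) - b * Real.log (b * n / (Sa + Sb))
      = b * (Real.log (Sa + Sb) - Real.log Sb) := by rw [h1, h2]; ring
  have hmono : Real.log Sb ≤ Real.log (Sa + Sb) := Real.log_le_log hSb (by linarith)
  constructor
  · rw [hid]; exact mul_nonneg hb (by linarith)
  · rw [hid]
    have hub : Real.log (Sa + Sb) - Real.log Sb ≤ (Sa + Sb) / Sb - 1 := by
      have h := Real.log_le_sub_one_of_pos (show (0:ℝ) < (Sa + Sb) / Sb by positivity)
      rwa [Real.log_div (by positivity) (by positivity)] at h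
    have h3 : b * (Real.log (Sa + Sb) - Real.log Sb) ≤ b * ((Sa + Sb) / Sb - 1) :=
      mul_le_mul_of_nonneg_left hub hb
    have h4 : b * ((Sa + Sb) / Sb - 1) = (Sa + Sb) * (b / Sb) - b := by
      field_simp
    linarith

private lemma key {n Sa Sb a b : ℝ} (hn : 0 < n) (hSa : 0 ≤ Sa) (hSb : 0 ≤ Sb)
    (ha : 0 ≤ a) (hb : 0 ≤ b) (ha0 : Sa = 0 → a = 0) (hb0 : Sb = 0 → b = 0) :
    0 ≤ a * Real.log (a * n / Sa) + b * Real.log (b * n / Sb)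
        - (a + b) * Real.log ((a + b) * n / (Sa + Sb)) ∧
    a * Real.log (a * n / Sa) + b * Real.log (b * n / Sb)
        - (a + b) * Real.log ((a + b) * n / (Sa + Sb))
      ≤ (Sa + Sb) * |a / Sa - b / Sb| := by
  rcases hSa.eq_or_lt with hSa' | hSa'
  · have ha' : a = 0 := ha0 hSa'.symm
    subst ha'
    rw [← hSa']
    constructor
    · simp
    · simp only [zero_mul, zero_div, zero_add, sub_self, zero_sub, abs_neg]
      positivity
  rcases hSb.eq_or_lt with hSb' | hSb'
  · have hb' : b = 0 := hb0 hSb'.symm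
    subst hb'
    rw [← hSb']
    constructor
    · simp
    · simp only [zero_mul, zero_div, add_zero, sub_self, sub_zero]
      positivity
  have hS : 0 < Sa + Sb := by linarith
  rcases ha.eq_or_lt with ha' | ha'
  · -- a = 0
    rw [← ha']
    simp only [zero_mul, zero_add, zero_div, zero_sub, abs_neg, abs_of_nonneg (div_nonneg hb hSb'.le)]
    exact key_edge hn hSa' hSb' hb
  rcases hb.eq_or_lt with hb' | hb'
  · -- b = 0
    rw [← hb']
    simp only [zero_mul, add_zero, zero_div, sub_zero, abs_of_nonneg (div_nonneg ha hSa'.le)]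
    have h := key_edge hn hSb' hSa' ha
    rw [show Sb + Sa = Sa + Sb by ring] at h
    exact h
  -- main case: a, b, Sa, Sb all positive
  have hab : 0 < a + b := by linarith
  have h1 : Real.log (a * n / Sa) = Real.log a + Real.log n - Real.log Sa := by
    rw [Real.log_div (by positivity) (by positivity), Real.log_mul (by positivity) (by positivity)]
  have h2 : Real.log (b * n / Sb) = Real.log b + Real.log n - Real.log Sb := by
    rw [Real.log_div (by positivity) (by positivity), Real.log_mul (by positivity) (by positivity)]
  have h3 : Real.log ((a + b) * n / (Sa + Sb))
      = Real.log (a + b) + Real.log n - Real.log (Sa + Sb) := by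
    rw [Real.log_div (by positivity) (by positivity), Real.log_mul (by positivity) (by positivity)]
  have ht1 : (0:ℝ) < a * (Sa + Sb) / (Sa * (a + b)) := by positivity
  have ht2 : (0:ℝ) < b * (Sa + Sb) / (Sb * (a + b)) := by positivity
  have h4 : Real.log (a * (Sa + Sb) / (Sa * (a + b)))
      = Real.log a + Real.log (Sa + Sb) - Real.log Sa - Real.log (a + b) := by
    rw [Real.log_div (by positivity) (by positivity),
      Real.log_mul (by positivity) (by positivity),
      Real.log_mul (by positivity) (by positivity)]
    ring
  have h5 : Real.log (b * (Sa + Sb) / (Sb * (a + b)))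
      = Real.log b + Real.log (Sa + Sb) - Real.log Sb - Real.log (a + b) := by
    rw [Real.log_div (by positivity) (by positivity),
      Real.log_mul (by positivity) (by positivity),
      Real.log_mul (by positivity) (by positivity)]
    ring
  have hid : a * Real.log (a * n / Sa) + b * Real.log (b * n / Sb)
      - (a + b) * Real.log ((a + b) * n / (Sa + Sb))
      = a * Real.log (a * (Sa + Sb) / (Sa * (a + b)))
        + b * Real.log (b * (Sa + Sb) / (Sb * (a + b))) := by
    rw [h1, h2, h3, h4, h5]; ring
  rw [hid]
  constructor
  · -- lower bound
    have lb1 := one_sub_inv_le_log ht1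
    have lb2 := one_sub_inv_le_log ht2
    have e1 : a * (1 - 1 / (a * (Sa + Sb) / (Sa * (a + b))))
        = a - Sa * (a + b) / (Sa + Sb) := by field_simp
    have e2 : b * (1 - 1 / (b * (Sa + Sb) / (Sb * (a + b))))
        = b - Sb * (a + b) / (Sa + Sb) := by field_simp
    have e3 : Sa * (a + b) / (Sa + Sb) + Sb * (a + b) / (Sa + Sb) = a + b := by
      field_simp
    have m1 := mul_le_mul_of_nonneg_left lb1 ha
    have m2 := mul_le_mul_of_nonneg_left lb2 hb
    rw [e1] at m1
    rw [e2] at m2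
    linarith
  · -- upper bound
    set r : ℝ := a / Sa - b / Sb with hr
    have ub1 := Real.log_le_sub_one_of_pos ht1
    have ub2 := Real.log_le_sub_one_of_pos ht2
    have m1 := mul_le_mul_of_nonneg_left ub1 ha
    have m2 := mul_le_mul_of_nonneg_left ub2 hb
    have e1 : a * (a * (Sa + Sb) / (Sa * (a + b)) - 1) = a * Sb * r / (a + b) := by
      rw [hr]; field_simp; ring
    have e2 : b * (b * (Sa + Sb) / (Sb * (a + b)) - 1) = -(b * Sa * r) / (a + b) := by
      rw [hr]; field_simp; ring
    rw [e1] at m1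
    rw [e2] at m2
    have u1 : a * Sb * r / (a + b) ≤ Sb * |r| := by
      rw [div_le_iff₀ hab]
      have w1 := mul_nonneg (mul_nonneg hSb'.le ha) (sub_nonneg.2 (le_abs_self r))
      have w2 := mul_nonneg (mul_nonneg hSb'.le hb) (abs_nonneg r)
      linarith [w1, w2]
    have u2 : -(b * Sa * r) / (a + b) ≤ Sa * |r| := by
      rw [div_le_iff₀ hab]
      have w1 : 0 ≤ Sa * b * (|r| + r) := by
        have : -|r| ≤ r := neg_abs_le r
        have : 0 ≤ |r| + r := by linarith
        positivity
      have w2 := mul_nonneg (mul_nonneg hSa'.le ha) (abs_nonneg r)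
      linarith [w1, w2]
    have : (Sa + Sb) * |r| = Sb * |r| + Sa * |r| := by ring
    linarith

/-- Merging output symbols `y1, y2` cannot increase the symmetric capacity, and the
capacity loss is bounded by `(P_Y(y1)+P_Y(y2))/ln 2` times the `ℓ1` distance of posteriors.
The merged channel is encoded on the same output alphabet, with the merged symbol `y*`
represented by `y1` (carrying probability `W(y1|x)+W(y2|x)`) and `y2` carrying zero. -/
theorem capacity_loss_of_merge {X Y : Type*} [Fintype X] [Fintype Y] [Nonempty X] [DecidableEq Y]
    (W : X → Y → ℝ) (hW0 : ∀ x y, 0 ≤ W x y) (hW1 : ∀ x, ∑ y : Y, W x y = 1)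
    (y1 y2 : Y) (hy : y1 ≠ y2)
    (Wm : X → Y → ℝ)
    (hWm : ∀ x y, Wm x y =
      if y = y1 then W x y1 + W x y2 else if y = y2 then 0 else W x y) :
    0 ≤ symCap W - symCap Wm ∧
      symCap W - symCap Wm ≤
        (PY W y1 + PY W y2) / Real.log 2 * ∑ x : X, |post W y1 x - post W y2 x| := by
  classical
  have hn : (0:ℝ) < (Fintype.card X : ℝ) := by exact_mod_cast Fintype.card_pos
  have hlog2 : (0:ℝ) < Real.log 2 := Real.log_pos (by norm_num)
  -- difference formula
  have hsplit : ∀ f : Y → ℝ, ∑ y, f y = f y1 + f y2 + ∑ y ∈ (univ.erase y1).erase y2, f y := by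
    intro f
    rw [← Finset.add_sum_erase _ f (mem_univ y1),
        ← Finset.add_sum_erase _ f (Finset.mem_erase.2 ⟨hy.symm, mem_univ y2⟩)]
    ring
  have hdiff : symCap W - symCap Wm =
      (∑ x, (W x y1 * Real.log (W x y1 * (Fintype.card X : ℝ) / ∑ x0, W x0 y1)
        + W x y2 * Real.log (W x y2 * (Fintype.card X : ℝ) / ∑ x0, W x0 y2)
        - (W x y1 + W x y2) * Real.log ((W x y1 + W x y2) * (Fintype.card X : ℝ)
            / ((∑ x0, W x0 y1) + (∑ x0, W x0 y2)))))
      / ((Fintype.card X : ℝ) * Real.log 2) := by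
    unfold symCap
    rw [hsplit, hsplit]
    have htail : ∑ y ∈ (univ.erase y1).erase y2,
          (∑ x, (Wm x y / (Fintype.card X : ℝ)) * Real.logb 2 (Wm x y * (Fintype.card X : ℝ) / ∑ x0, Wm x0 y))
        = ∑ y ∈ (univ.erase y1).erase y2,
          (∑ x, (W x y / (Fintype.card X : ℝ)) * Real.logb 2 (W x y * (Fintype.card X : ℝ) / ∑ x0, W x0 y)) := by
      refine Finset.sum_congr rfl fun y hyy => ?_
      have hy2' : y ≠ y2 := (Finset.mem_erase.1 hyy).1
      have hy1' : y ≠ y1 := (Finset.mem_erase.1 ((Finset.mem_erase.1 hyy).2)).1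
      have hWmW : ∀ x, Wm x y = W x y := fun x => by rw [hWm]; simp [hy1', hy2']
      simp only [hWmW]
    have hz : (∑ x, (Wm x y2 / (Fintype.card X : ℝ)) * Real.logb 2 (Wm x y2 * (Fintype.card X : ℝ) / ∑ x0, Wm x0 y2)) = 0 := by
      refine Finset.sum_eq_zero fun x _ => ?_
      have h0 : Wm x y2 = 0 := by rw [hWm]; simp [hy.symm]
      simp [h0]
    have hm1 : ∀ x, Wm x y1 = W x y1 + W x y2 := fun x => by rw [hWm]; simp
    have hy1term : (∑ x, (Wm x y1 / (Fintype.card X : ℝ)) * Real.logb 2 (Wm x y1 * (Fintype.card X : ℝ) / ∑ x0, Wm x0 y1))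
        = ∑ x, ((W x y1 + W x y2) / (Fintype.card X : ℝ)) *
            Real.logb 2 ((W x y1 + W x y2) * (Fintype.card X : ℝ) / ((∑ x0, W x0 y1) + (∑ x0, W x0 y2))) := by
      simp only [hm1, Finset.sum_add_distrib]
    rw [htail, hz, hy1term]
    have hmain : (∑ x, (W x y1 / (Fintype.card X : ℝ)) * Real.logb 2 (W x y1 * (Fintype.card X : ℝ) / ∑ x0, W x0 y1))
        + (∑ x, (W x y2 / (Fintype.card X : ℝ)) * Real.logb 2 (W x y2 * (Fintype.card X : ℝ) / ∑ x0, W x0 y2))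
        - (∑ x, ((W x y1 + W x y2) / (Fintype.card X : ℝ)) *
            Real.logb 2 ((W x y1 + W x y2) * (Fintype.card X : ℝ) / ((∑ x0, W x0 y1) + (∑ x0, W x0 y2))))
        = (∑ x, (W x y1 * Real.log (W x y1 * (Fintype.card X : ℝ) / ∑ x0, W x0 y1)
            + W x y2 * Real.log (W x y2 * (Fintype.card X : ℝ) / ∑ x0, W x0 y2)
            - (W x y1 + W x y2) * Real.log ((W x y1 + W x y2) * (Fintype.card X : ℝ)
                / ((∑ x0, W x0 y1) + (∑ x0, W x0 y2)))))
          / ((Fintype.card X : ℝ) * Real.log 2) := by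
      rw [← Finset.sum_add_distrib, ← Finset.sum_sub_distrib, Finset.sum_div]
      refine Finset.sum_congr rfl fun x _ => ?_
      simp only [← Real.log_div_log]
      field_simp
    linear_combination hmain
  -- apply the pointwise key lemma
  have hSa0 : (0:ℝ) ≤ ∑ x, W x y1 := Finset.sum_nonneg fun x _ => hW0 x y1
  have hSb0 : (0:ℝ) ≤ ∑ x, W x y2 := Finset.sum_nonneg fun x _ => hW0 x y2
  have hkey : ∀ x : X,
      0 ≤ W x y1 * Real.log (W x y1 * (Fintype.card X : ℝ) / ∑ x0, W x0 y1)
        + W x y2 * Real.log (W x y2 * (Fintype.card X : ℝ) / ∑ x0, W x0 y2)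
        - (W x y1 + W x y2) * Real.log ((W x y1 + W x y2) * (Fintype.card X : ℝ)
            / ((∑ x0, W x0 y1) + (∑ x0, W x0 y2))) ∧
      W x y1 * Real.log (W x y1 * (Fintype.card X : ℝ) / ∑ x0, W x0 y1)
        + W x y2 * Real.log (W x y2 * (Fintype.card X : ℝ) / ∑ x0, W x0 y2)
        - (W x y1 + W x y2) * Real.log ((W x y1 + W x y2) * (Fintype.card X : ℝ)
            / ((∑ x0, W x0 y1) + (∑ x0, W x0 y2)))
      ≤ ((∑ x0, W x0 y1) + (∑ x0, W x0 y2)) *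
          |W x y1 / (∑ x0, W x0 y1) - W x y2 / (∑ x0, W x0 y2)| := fun x =>
    key hn hSa0 hSb0 (hW0 x y1) (hW0 x y2)
      (fun h => (Finset.sum_eq_zero_iff_of_nonneg (fun i _ => hW0 i y1)).1 h x (mem_univ x))
      (fun h => (Finset.sum_eq_zero_iff_of_nonneg (fun i _ => hW0 i y2)).1 h x (mem_univ x))
  have hsum0 : (0:ℝ) ≤ ∑ x, (W x y1 * Real.log (W x y1 * (Fintype.card X : ℝ) / ∑ x0, W x0 y1)
        + W x y2 * Real.log (W x y2 * (Fintype.card X : ℝ) / ∑ x0, W x0 y2)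
        - (W x y1 + W x y2) * Real.log ((W x y1 + W x y2) * (Fintype.card X : ℝ)
            / ((∑ x0, W x0 y1) + (∑ x0, W x0 y2)))) :=
    Finset.sum_nonneg fun x _ => (hkey x).1
  have hsumU : (∑ x, (W x y1 * Real.log (W x y1 * (Fintype.card X : ℝ) / ∑ x0, W x0 y1)
        + W x y2 * Real.log (W x y2 * (Fintype.card X : ℝ) / ∑ x0, W x0 y2)
        - (W x y1 + W x y2) * Real.log ((W x y1 + W x y2) * (Fintype.card X : ℝ)
            / ((∑ x0, W x0 y1) + (∑ x0, W x0 y2)))))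
      ≤ ∑ x, ((∑ x0, W x0 y1) + (∑ x0, W x0 y2)) *
          |W x y1 / (∑ x0, W x0 y1) - W x y2 / (∑ x0, W x0 y2)| :=
    Finset.sum_le_sum fun x _ => (hkey x).2
  constructor
  · rw [hdiff]
    exact div_nonneg hsum0 (by positivity)
  · rw [hdiff]
    have step1 := (div_le_div_iff_of_pos_right (c := (Fintype.card X : ℝ) * Real.log 2)
      (by positivity)).2 hsumU
    refine le_trans step1 (le_of_eq ?_)
    rw [← Finset.mul_sum]
    simp only [PY, post]
    have h1 : (Fintype.card X : ℝ) ≠ 0 := ne_of_gt hn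
    have h2 : Real.log 2 ≠ 0 := ne_of_gt hlog2
    field_simp
end
end

section
/- Let W : X → Y be a DMC with |X| = q and |Y| = M. Then there exist two distinct output symbols y1, y2 ∈ Y such that P_Y(y1) ≤ 2/M, P_Y(y2) ≤ 2/M, and ||P_W(·|y1) − P_W(·|y2)||_1 = O((1/M)^{1/(q−1)}). Consequently, merging y1 and y2 yields a degraded channel W̃ with 0 ≤ I(W) − I(W̃) = O((1/M)^{q/(q−1)}). -/
open Finset

noncomputable section

/-- The channel obtained from `W` by merging outputs `y1` and `y2`, encoded on the same
output alphabet: the merged symbol is represented by `y1` and `y2` gets zero mass. -/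
def mergeCh {X Y : Type*} [DecidableEq Y] (W : X → Y → ℝ) (y1 y2 : Y)
    (x : X) (y : Y) : ℝ :=
  if y = y1 then W x y1 + W x y2 else if y = y2 then 0 else W x y

/-!
By Markov's inequality more than half of the `M` outputs are light, `P_Y(y) ≤ 2 / M`. A posterior
is determined by `q - 1` of its coordinates; cutting each of them into `K ≈ (M / 5)^(1/(q-1))`
intervals gives fewer cells than light outputs, so two light outputs have posteriors that are
`O(1 / K)`-close in `ℓ¹`.

Merging `y₁` and `y₂` changes `I(W)` by `1 / (q log 2)` times a sum over the inputs of two-term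
log-sum defects. Each defect is nonnegative by `log x ≥ 1 - 1 / x`, and by `log x ≤ x - 1` it is
at most `(s₁ + s₂) |P_W(x|y₁) - P_W(x|y₂)|`, where `sᵢ = q P_Y(yᵢ) = O(q / M)`.
-/

open Real

section MergeDefect

def mergeDefect (a b s₁ s₂ : ℝ) : ℝ :=
  a * log (a / s₁) + b * log (b / s₂) - (a + b) * log ((a + b) / (s₁ + s₂))

variable {a b s₁ s₂ : ℝ}

lemma sub_le_mul_log_div {m : ℝ} (ha : 0 ≤ a) (hm : 0 < m) : a - m ≤ a * log (a / m) := by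
  rcases ha.eq_or_lt with rfl | ha
  · simpa using hm.le
  have h := one_sub_inv_le_log_of_pos (div_pos ha hm)
  rw [inv_div] at h
  calc a - m = a * (1 - m / a) := by field_simp
    _ ≤ a * log (a / m) := mul_le_mul_of_nonneg_left h ha.le

lemma mul_log_div_le {m : ℝ} (ha : 0 ≤ a) (hm : 0 < m) : a * log (a / m) ≤ a ^ 2 / m - a := by
  rcases ha.eq_or_lt with rfl | ha
  · simp
  calc a * log (a / m) ≤ a * (a / m - 1) :=
        mul_le_mul_of_nonneg_left (log_le_sub_one_of_pos (div_pos ha hm)) ha.le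
    _ = a ^ 2 / m - a := by ring

lemma mul_log_div_sub_mul_log {s t : ℝ} (hs : s ≠ 0) (ht : t ≠ 0) :
    a * log (a / s) - a * log t = a * log (a / (s * t)) := by
  rcases eq_or_ne a 0 with rfl | ha
  · simp
  rw [← div_div, log_div (div_ne_zero ha hs) ht, mul_sub]

/-- The reference masses `s₁ t` and `s₂ t` add up to `a + b`, so the two terms can be bounded
separately by `a - m ≤ a log (a / m) ≤ a² / m - a`. -/
lemma mergeDefect_eq (hs₁ : 0 < s₁) (hs₂ : 0 < s₂) (hab : 0 < a + b) :
    mergeDefect a b s₁ s₂ =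
      a * log (a / (s₁ * ((a + b) / (s₁ + s₂)))) + b * log (b / (s₂ * ((a + b) / (s₁ + s₂)))) := by
  have ht : (a + b) / (s₁ + s₂) ≠ 0 := by positivity
  rw [← mul_log_div_sub_mul_log hs₁.ne' ht, ← mul_log_div_sub_mul_log hs₂.ne' ht, mergeDefect]
  ring

lemma mergeDefect_eq_zero_or_pos (ha : 0 ≤ a) (hb : 0 ≤ b) (has : a ≤ s₁) (hbs : b ≤ s₂) :
    mergeDefect a b s₁ s₂ = 0 ∨ 0 < s₁ ∧ 0 < s₂ ∧ 0 < a + b := by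
  rcases (ha.trans has).eq_or_lt with hs₁ | hs₁
  · obtain rfl : a = 0 := by linarith
    simp [mergeDefect, ← hs₁]
  rcases (hb.trans hbs).eq_or_lt with hs₂ | hs₂
  · obtain rfl : b = 0 := by linarith
    simp [mergeDefect, ← hs₂]
  rcases (add_nonneg ha hb).eq_or_lt with hab | hab
  · obtain ⟨rfl, rfl⟩ := (add_eq_zero_iff_of_nonneg ha hb).mp hab.symm
    simp [mergeDefect]
  exact Or.inr ⟨hs₁, hs₂, hab⟩

lemma mergeDefect_nonneg (ha : 0 ≤ a) (hb : 0 ≤ b) (has : a ≤ s₁) (hbs : b ≤ s₂) :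
    0 ≤ mergeDefect a b s₁ s₂ := by
  obtain h | ⟨hs₁, hs₂, hab⟩ := mergeDefect_eq_zero_or_pos ha hb has hbs
  · exact h.ge
  have ht : 0 < (a + b) / (s₁ + s₂) := by positivity
  have h₁ := sub_le_mul_log_div ha (mul_pos hs₁ ht)
  have h₂ := sub_le_mul_log_div hb (mul_pos hs₂ ht)
  have hsum : s₁ * ((a + b) / (s₁ + s₂)) + s₂ * ((a + b) / (s₁ + s₂)) = a + b := by
    field_simp
  rw [mergeDefect_eq hs₁ hs₂ hab]
  linarith

lemma mergeDefect_le (ha : 0 ≤ a) (hb : 0 ≤ b) (has : a ≤ s₁) (hbs : b ≤ s₂) :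
    mergeDefect a b s₁ s₂ ≤ (s₁ + s₂) * |a / s₁ - b / s₂| := by
  obtain h | ⟨hs₁, hs₂, hab⟩ := mergeDefect_eq_zero_or_pos ha hb has hbs
  · rw [h]
    exact mul_nonneg (add_nonneg (ha.trans has) (hb.trans hbs)) (abs_nonneg _)
  have ht : 0 < (a + b) / (s₁ + s₂) := by positivity
  have h₁ := mul_log_div_le ha (mul_pos hs₁ ht)
  have h₂ := mul_log_div_le hb (mul_pos hs₂ ht)
  have hchi : a ^ 2 / (s₁ * ((a + b) / (s₁ + s₂))) - a + (b ^ 2 / (s₂ * ((a + b) / (s₁ + s₂))) - b)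
      = (s₂ * a - s₁ * b) ^ 2 / (s₁ * s₂ * (a + b)) := by
    field_simp
    ring
  have hgap : a / s₁ - b / s₂ = (s₂ * a - s₁ * b) / (s₁ * s₂) := by
    field_simp
  have hd : |s₂ * a - s₁ * b| ≤ (s₁ + s₂) * (a + b) := by
    rw [abs_le]; constructor <;> nlinarith
  have hchi_le : (s₂ * a - s₁ * b) ^ 2 / (s₁ * s₂ * (a + b)) ≤ (s₁ + s₂) * |a / s₁ - b / s₂| := by
    rw [hgap, abs_div, abs_of_pos (mul_pos hs₁ hs₂), div_le_iff₀ (by positivity), ← sq_abs]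
    field_simp
    nlinarith [abs_nonneg (s₂ * a - s₁ * b)]
  rw [mergeDefect_eq hs₁ hs₂ hab]
  linarith

end MergeDefect

section Capacity

variable {X Y : Type*} [Fintype X]

/-- `symCap W = ∑ y, symCapTerm (W · y)`. -/
def symCapTerm (v : X → ℝ) : ℝ :=
  ∑ x : X, (v x / (Fintype.card X : ℝ)) *
    logb 2 (v x * (Fintype.card X : ℝ) / ∑ x0 : X, v x0)

lemma div_mul_logb_two {a s q : ℝ} (ha : 0 ≤ a) (has : a ≤ s) (hq : 0 < q) :
    a / q * logb 2 (a * q / s) = (a * log (a / s) + a * log q) / (q * log 2) := by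
  rcases ha.eq_or_lt with rfl | ha
  · simp
  rw [logb, mul_div_right_comm, log_mul (div_pos ha (ha.trans_le has)).ne' hq.ne']
  field_simp

lemma symCapTerm_add_symCapTerm_sub {v w : X → ℝ} (hv : ∀ x, 0 ≤ v x) (hw : ∀ x, 0 ≤ w x) :
    symCapTerm v + symCapTerm w - symCapTerm (v + w) =
      (∑ x, mergeDefect (v x) (w x) (∑ x0, v x0) (∑ x0, w x0)) /
        ((Fintype.card X : ℝ) * log 2) := by
  have hsum : ∑ x0, (v x0 + w x0) = ∑ x0, v x0 + ∑ x0, w x0 := Finset.sum_add_distrib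
  simp only [symCapTerm, Pi.add_apply]
  rw [hsum, ← Finset.sum_add_distrib, ← Finset.sum_sub_distrib, Finset.sum_div]
  refine Finset.sum_congr rfl fun x _ => ?_
  have hq : (0 : ℝ) < Fintype.card X := Nat.cast_pos.mpr (Fintype.card_pos_iff.mpr ⟨x⟩)
  have hvx : v x ≤ ∑ x0, v x0 := Finset.single_le_sum (fun x0 _ => hv x0) (Finset.mem_univ x)
  have hwx : w x ≤ ∑ x0, w x0 := Finset.single_le_sum (fun x0 _ => hw x0) (Finset.mem_univ x)
  rw [div_mul_logb_two (hv x) hvx hq, div_mul_logb_two (hw x) hwx hq,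
    div_mul_logb_two (add_nonneg (hv x) (hw x)) (add_le_add hvx hwx) hq, mergeDefect]
  ring

lemma symCap_sub_symCap_mergeCh [Fintype Y] [DecidableEq Y] (W : X → Y → ℝ) {y₁ y₂ : Y}
    (hne : y₁ ≠ y₂) :
    symCap W - symCap (mergeCh W y₁ y₂) =
      symCapTerm (W · y₁) + symCapTerm (W · y₂) - symCapTerm ((W · y₁) + (W · y₂)) := by
  have hcol : ∀ y, y ≠ y₁ ∧ y ≠ y₂ → (fun x => mergeCh W y₁ y₂ x y) = (W · y) := fun y hy =>
    funext fun x => by simp [mergeCh, hy.1, hy.2]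
  have hcol₁ : (fun x => mergeCh W y₁ y₂ x y₁) = (W · y₁) + (W · y₂) := by
    funext x; simp [mergeCh]
  have hcol₂ : (fun x => mergeCh W y₁ y₂ x y₂) = 0 := by
    funext x; simp [mergeCh, hne.symm]
  have hzero : symCapTerm (0 : X → ℝ) = 0 := by simp [symCapTerm]
  change ∑ y, symCapTerm (W · y) - ∑ y, symCapTerm (fun x => mergeCh W y₁ y₂ x y) = _
  rw [← Finset.sum_sub_distrib, Fintype.sum_eq_add y₁ y₂ hne fun y hy => by rw [hcol y hy, sub_self],
    hcol₁, hcol₂, hzero]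
  ring

variable [Fintype Y] [DecidableEq Y] {W : X → Y → ℝ}

lemma symCap_sub_symCap_mergeCh_eq (hW : ∀ x y, 0 ≤ W x y) {y₁ y₂ : Y} (hne : y₁ ≠ y₂) :
    symCap W - symCap (mergeCh W y₁ y₂) =
      (∑ x, mergeDefect (W x y₁) (W x y₂) (∑ x0, W x0 y₁) (∑ x0, W x0 y₂)) /
        ((Fintype.card X : ℝ) * log 2) := by
  rw [symCap_sub_symCap_mergeCh W hne, symCapTerm_add_symCapTerm_sub (hW · y₁) (hW · y₂)]

lemma symCap_mergeCh_le (hW : ∀ x y, 0 ≤ W x y) {y₁ y₂ : Y} (hne : y₁ ≠ y₂) :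
    symCap (mergeCh W y₁ y₂) ≤ symCap W := by
  rw [← sub_nonneg, symCap_sub_symCap_mergeCh_eq hW hne]
  refine div_nonneg (Finset.sum_nonneg fun x _ => mergeDefect_nonneg (hW x y₁) (hW x y₂) ?_ ?_)
    (by positivity)
  all_goals exact Finset.single_le_sum (fun x0 _ => hW x0 _) (Finset.mem_univ x)

lemma symCap_sub_symCap_mergeCh_le (hW : ∀ x y, 0 ≤ W x y) {y₁ y₂ : Y} (hne : y₁ ≠ y₂) :
    symCap W - symCap (mergeCh W y₁ y₂) ≤
      (PY W y₁ + PY W y₂) / log 2 * ∑ x, |post W y₁ x - post W y₂ x| := by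
  rw [symCap_sub_symCap_mergeCh_eq hW hne, PY, PY, ← add_div, div_div, div_mul_eq_mul_div,
    Finset.mul_sum]
  gcongr with x
  exact mergeDefect_le (hW x y₁) (hW x y₂)
    (Finset.single_le_sum (fun x0 _ => hW x0 y₁) (Finset.mem_univ x))
    (Finset.single_le_sum (fun x0 _ => hW x0 y₂) (Finset.mem_univ x))

end Capacity

section Pigeonhole

/-- The right endpoint `t = 1` is put in the last of the `K` cells. -/
def bucket (K : ℕ) (t : ℝ) : ℕ := min ⌊t * K⌋₊ (K - 1)

variable {K : ℕ} {t t' : ℝ}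

lemma bucket_lt (hK : 0 < K) : bucket K t < K := by
  unfold bucket; omega

lemma bucket_le_and_le_bucket_add_one (hK : 0 < K) (ht₀ : 0 ≤ t) (ht₁ : t ≤ 1) :
    (bucket K t : ℝ) ≤ t * K ∧ t * K ≤ bucket K t + 1 := by
  have htK : 0 ≤ t * K := by positivity
  refine ⟨(Nat.cast_le.mpr (min_le_left _ _)).trans (Nat.floor_le htK), ?_⟩
  rcases le_total ⌊t * K⌋₊ (K - 1) with h | h
  · rw [bucket, min_eq_left h]
    exact (Nat.lt_floor_add_one _).le
  · rw [bucket, min_eq_right h, Nat.cast_sub (by omega), Nat.cast_one, sub_add_cancel]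
    exact mul_le_of_le_one_left (Nat.cast_nonneg K) ht₁

lemma abs_sub_le_of_bucket_eq (hK : 0 < K) (ht₀ : 0 ≤ t) (ht₁ : t ≤ 1) (ht₀' : 0 ≤ t')
    (ht₁' : t' ≤ 1) (h : bucket K t = bucket K t') : |t - t'| ≤ 1 / K := by
  obtain ⟨h₁, h₂⟩ := bucket_le_and_le_bucket_add_one hK ht₀ ht₁
  obtain ⟨h₁', h₂'⟩ := bucket_le_and_le_bucket_add_one hK ht₀' ht₁'
  rw [h] at h₁ h₂
  rw [abs_sub_le_iff, le_div_iff₀ (by positivity), le_div_iff₀ (by positivity)]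
  constructor <;> nlinarith

/-- The gap at `x₀` is minus the sum of the other gaps. -/
lemma sum_abs_sub_le_of_sum_eq {X : Type*} [Fintype X] [DecidableEq X] {p r : X → ℝ} (x₀ : X)
    (h : ∑ x, p x = ∑ x, r x) {ε : ℝ} (hε : ∀ x ≠ x₀, |p x - r x| ≤ ε) :
    ∑ x, |p x - r x| ≤ 2 * (Fintype.card X - 1 : ℕ) * ε := by
  set E := Finset.univ.erase x₀
  have hE : ∑ x ∈ E, |p x - r x| ≤ (Fintype.card X - 1 : ℕ) * ε := by
    have := Finset.sum_le_card_nsmul E _ ε fun x hx => hε x (Finset.ne_of_mem_erase hx)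
    rwa [Finset.card_erase_of_mem (Finset.mem_univ _), Finset.card_univ, nsmul_eq_mul] at this
  have hx₀ : p x₀ - r x₀ = ∑ x ∈ E, (r x - p x) := by
    rw [Finset.sum_sub_distrib, Finset.sum_erase_eq_sub (Finset.mem_univ _),
      Finset.sum_erase_eq_sub (Finset.mem_univ _), h]
    ring
  have hx₀_le : |p x₀ - r x₀| ≤ ∑ x ∈ E, |p x - r x| := by
    rw [hx₀]
    exact (Finset.abs_sum_le_sum_abs _ _).trans_eq (Finset.sum_congr rfl fun x _ => abs_sub_comm _ _)
  rw [← Finset.add_sum_erase _ _ (Finset.mem_univ x₀)]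
  linarith

/-- Pigeonhole: a vector is sorted by its mass and by the buckets of all but one coordinate. -/
lemma exists_ne_sum_abs_sub_le {X Y : Type*} [Fintype X] [Nonempty X] (S : Finset Y)
    (p : Y → X → ℝ) (hp : ∀ y x, 0 ≤ p y x) (hmass : ∀ y, ∑ x, p y x = 0 ∨ ∑ x, p y x = 1)
    (hK : 0 < K) (hS : 2 * K ^ (Fintype.card X - 1) < S.card) :
    ∃ y₁ ∈ S, ∃ y₂ ∈ S, y₁ ≠ y₂ ∧
      ∑ x, |p y₁ x - p y₂ x| ≤ 2 * (Fintype.card X - 1 : ℕ) / K := by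
  classical
  obtain ⟨x₀⟩ := ‹Nonempty X›
  have hp₁ : ∀ y x, p y x ≤ 1 := fun y x =>
    (Finset.single_le_sum (fun x _ => hp y x) (Finset.mem_univ x)).trans
      ((hmass y).elim (fun h => h.le.trans zero_le_one) le_of_eq)
  let cell : Y → Bool × ({x // x ≠ x₀} → Fin K) := fun y =>
    (decide (∑ x, p y x = 1), fun x => ⟨bucket K (p y x), bucket_lt hK⟩)
  have hcard : (Finset.univ : Finset (Bool × ({x // x ≠ x₀} → Fin K))).card < S.card := by
    simpa [Fintype.card_subtype_compl, Fintype.card_fun] using hS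
  obtain ⟨y₁, hy₁, y₂, hy₂, hne, hcell⟩ :=
    Finset.exists_ne_map_eq_of_card_lt_of_maps_to hcard fun y _ => Finset.mem_univ (cell y)
  refine ⟨y₁, hy₁, y₂, hy₂, hne, ?_⟩
  have hsum : ∑ x, p y₁ x = ∑ x, p y₂ x := by
    have := congrArg Prod.fst hcell
    rcases hmass y₁ with h₁ | h₁ <;> rcases hmass y₂ with h₂ | h₂ <;> simp_all [cell]
  have hclose : ∀ x ≠ x₀, |p y₁ x - p y₂ x| ≤ 1 / K := fun x hx =>
    abs_sub_le_of_bucket_eq hK (hp y₁ x) (hp₁ y₁ x) (hp y₂ x) (hp₁ y₂ x)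
      (congrArg Fin.val (congrFun (congrArg Prod.snd hcell) ⟨x, hx⟩))
  calc ∑ x, |p y₁ x - p y₂ x| ≤ 2 * (Fintype.card X - 1 : ℕ) * (1 / K) :=
        sum_abs_sub_le_of_sum_eq x₀ hsum hclose
    _ = 2 * (Fintype.card X - 1 : ℕ) / K := by ring

end Pigeonhole

lemma half_card_lt_card_filter_le_two_div {Y : Type*} [Fintype Y] (P : Y → ℝ)
    (hP : ∀ y, 0 ≤ P y) (hsum : ∑ y, P y = 1) :
    (Fintype.card Y : ℝ) / 2 <
      (Finset.univ.filter fun y => P y ≤ 2 / (Fintype.card Y : ℝ)).card := by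
  classical
  set M : ℝ := (Fintype.card Y : ℝ)
  have hM : 0 < M := Nat.cast_pos.mpr <| Fintype.card_pos_iff.mpr <| by
    by_contra h
    simp [not_nonempty_iff.mp h] at hsum
  set H := Finset.univ.filter fun y => ¬ P y ≤ 2 / M
  have hH : (H.card : ℝ) < M / 2 := by
    rcases H.eq_empty_or_nonempty with h | h
    · rw [h, Finset.card_empty, Nat.cast_zero]; positivity
    have hlt : ∑ _y ∈ H, 2 / M < ∑ y ∈ H, P y :=
      Finset.sum_lt_sum_of_nonempty h fun y hy => lt_of_not_ge (Finset.mem_filter.mp hy).2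
    have hle : ∑ y ∈ H, P y ≤ 1 :=
      hsum ▸ Finset.sum_le_sum_of_subset_of_nonneg (Finset.subset_univ _) fun y _ _ => hP y
    rw [Finset.sum_const, nsmul_eq_mul, ← mul_div_assoc] at hlt
    have := (div_lt_one hM).mp (hlt.trans_le hle)
    linarith
  have hcard := Finset.card_filter_add_card_filter_not (s := Finset.univ) fun y => P y ≤ 2 / M
  rw [Finset.card_univ] at hcard
  have : ((Finset.univ.filter fun y => P y ≤ 2 / M).card : ℝ) + H.card = M := by
    rw [← Nat.cast_add, hcard]
  linarith

section Posterior

variable {X Y : Type*} [Fintype X] {W : X → Y → ℝ}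

lemma post_nonneg (hW : ∀ x y, 0 ≤ W x y) (y : Y) (x : X) : 0 ≤ post W y x :=
  div_nonneg (hW x y) (Finset.sum_nonneg fun x0 _ => hW x0 y)

lemma sum_post_eq_zero_or_one (W : X → Y → ℝ) (y : Y) :
    ∑ x, post W y x = 0 ∨ ∑ x, post W y x = 1 := by
  simp only [post, ← Finset.sum_div]
  exact (eq_or_ne (∑ x, W x y) 0).imp (fun h => by rw [h, div_zero]) div_self

lemma sum_abs_sub_post_le_two (hW : ∀ x y, 0 ≤ W x y) (y₁ y₂ : Y) :
    ∑ x, |post W y₁ x - post W y₂ x| ≤ 2 := by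
  have hle : ∀ y, ∑ x, post W y x ≤ 1 := fun y =>
    (sum_post_eq_zero_or_one W y).elim (fun h => h.le.trans zero_le_one) le_of_eq
  calc ∑ x, |post W y₁ x - post W y₂ x| ≤ ∑ x, (post W y₁ x + post W y₂ x) :=
        Finset.sum_le_sum fun x _ => (abs_sub _ _).trans_eq <| by
          rw [abs_of_nonneg (post_nonneg hW y₁ x), abs_of_nonneg (post_nonneg hW y₂ x)]
    _ ≤ 2 := by rw [Finset.sum_add_distrib]; linarith [hle y₁, hle y₂]

lemma sum_PY [Fintype Y] [Nonempty X] (hrow : ∀ x, ∑ y, W x y = 1) : ∑ y, PY W y = 1 := by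
  simp only [PY, ← Finset.sum_div]
  rw [Finset.sum_comm, Finset.sum_congr rfl fun x _ => hrow x, Finset.sum_const, Finset.card_univ,
    nsmul_one, div_self (Nat.cast_ne_zero.mpr Fintype.card_ne_zero)]

end Posterior

lemma exists_light_pair_sum_abs_sub_post_le {X Y : Type*} [Fintype X] [Fintype Y] {n : ℕ}
    (hn : 0 < n) (hX : Fintype.card X = n + 1) (hY : 2 ≤ Fintype.card Y)
    (W : X → Y → ℝ) (hW : ∀ x y, 0 ≤ W x y) (hrow : ∀ x, ∑ y, W x y = 1) :
    ∃ y₁ y₂ : Y, y₁ ≠ y₂ ∧ PY W y₁ ≤ 2 / (Fintype.card Y : ℝ) ∧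
      PY W y₂ ≤ 2 / (Fintype.card Y : ℝ) ∧
      ∑ x, |post W y₁ x - post W y₂ x| ≤ 20 * n * (1 / (Fintype.card Y : ℝ)) ^ ((1 : ℝ) / n) := by
  classical
  have : Nonempty X := Fintype.card_pos_iff.mp (by omega)
  set M : ℝ := (Fintype.card Y : ℝ)
  have hM : 2 ≤ M := Nat.ofNat_le_cast.mpr hY
  set S := Finset.univ.filter fun y => PY W y ≤ 2 / M
  have hS : M / 2 < S.card := half_card_lt_card_filter_le_two_div (PY W)
    (fun y => div_nonneg (Finset.sum_nonneg fun x _ => hW x y) (Nat.cast_nonneg _)) (sum_PY hrow)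
  -- `⌊t⌋₊ ^ n ≤ M / 5`, so the `2 ⌊t⌋₊ ^ n` cells are fewer than the light outputs
  set t : ℝ := (M / 5) ^ (n⁻¹ : ℝ)
  have ht : 0 < t := by positivity
  have hnr : (1 : ℝ) ≤ n := by exact_mod_cast hn
  suffices ∃ y₁ ∈ S, ∃ y₂ ∈ S, y₁ ≠ y₂ ∧ ∑ x, |post W y₁ x - post W y₂ x| ≤ 4 * n / t by
    obtain ⟨y₁, hy₁, y₂, hy₂, hne, hD⟩ := this
    refine ⟨y₁, y₂, hne, (Finset.mem_filter.mp hy₁).2, (Finset.mem_filter.mp hy₂).2, hD.trans ?_⟩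
    have hinv : 1 / t = 5 ^ (n⁻¹ : ℝ) * (1 / M) ^ (n⁻¹ : ℝ) := by
      rw [one_div, ← Real.inv_rpow (by positivity), ← Real.mul_rpow (by norm_num) (by positivity)]
      congr 1
      field_simp
    have h5 : (5 : ℝ) ^ (n⁻¹ : ℝ) ≤ 5 :=
      Real.rpow_le_self_of_one_le (by norm_num) (inv_le_one_of_one_le₀ hnr)
    calc 4 * n / t = 4 * n * (5 ^ (n⁻¹ : ℝ) * (1 / M) ^ (n⁻¹ : ℝ)) := by
          rw [← hinv, mul_one_div]
      _ ≤ 4 * n * (5 * (1 / M) ^ (n⁻¹ : ℝ)) := by gcongr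
      _ = 20 * n * (1 / M) ^ ((1 : ℝ) / n) := by rw [one_div (n : ℝ)]; ring
  rcases (Nat.floor t).eq_zero_or_pos with hK | hK
  · obtain ⟨y₁, hy₁, y₂, hy₂, hne⟩ := Finset.one_lt_card.mp <| by
      have : (1 : ℝ) < S.card := by linarith
      exact_mod_cast this
    refine ⟨y₁, hy₁, y₂, hy₂, hne, (sum_abs_sub_post_le_two hW y₁ y₂).trans ?_⟩
    have ht1 : t < 1 := Nat.floor_eq_zero.mp hK
    rw [le_div_iff₀ ht]
    nlinarith
  · set K := ⌊t⌋₊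
    have hKt : (K : ℝ) ≤ t := Nat.floor_le ht.le
    have hcard : 2 * K ^ (Fintype.card X - 1) < S.card := by
      have hKn : (K : ℝ) ^ n ≤ M / 5 :=
        (pow_le_pow_left₀ (Nat.cast_nonneg _) hKt n).trans_eq
          (Real.rpow_inv_natCast_pow (by positivity) hn.ne')
      rw [hX, Nat.add_sub_cancel]
      exact_mod_cast (by linarith : (2 * K ^ n : ℝ) < S.card)
    obtain ⟨y₁, hy₁, y₂, hy₂, hne, hD⟩ := exists_ne_sum_abs_sub_le S (post W) (post_nonneg hW)
      (sum_post_eq_zero_or_one W) hK hcard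
    refine ⟨y₁, hy₁, y₂, hy₂, hne, hD.trans ?_⟩
    rw [hX, Nat.add_sub_cancel, div_le_div_iff₀ (by positivity) ht]
    have := Nat.lt_floor_add_one t
    have hK1 : (1 : ℝ) ≤ K := by exact_mod_cast hK
    nlinarith

/-- For any DMC with input size `q` and output size `M` there are two output symbols of
mass `O(1/M)` whose posteriors are `O((1/M)^{1/(q−1)})`-close in `ℓ1`; merging them
incurs a capacity loss of `O((1/M)^{q/(q−1)})`, where the implied constants depend
only on `q`. -/
theorem exists_good_merge_pair (q : ℕ) (hq : 2 ≤ q) :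
    ∃ C C' : ℝ, 0 < C ∧ 0 < C' ∧
      ∀ (X Y : Type) [Fintype X] [Fintype Y] [DecidableEq Y],
        Fintype.card X = q → 2 ≤ Fintype.card Y →
        ∀ W : X → Y → ℝ, (∀ x y, 0 ≤ W x y) → (∀ x, ∑ y : Y, W x y = 1) →
        ∃ y1 y2 : Y, y1 ≠ y2 ∧
          PY W y1 ≤ 2 / (Fintype.card Y : ℝ) ∧
          PY W y2 ≤ 2 / (Fintype.card Y : ℝ) ∧
          (∑ x : X, |post W y1 x - post W y2 x|) ≤
            C * (1 / (Fintype.card Y : ℝ)) ^ ((1 : ℝ) / ((q : ℝ) - 1)) ∧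
          0 ≤ symCap W - symCap (mergeCh W y1 y2) ∧
          symCap W - symCap (mergeCh W y1 y2) ≤
            C' * (1 / (Fintype.card Y : ℝ)) ^ ((q : ℝ) / ((q : ℝ) - 1)) := by
  obtain ⟨n, rfl⟩ : ∃ n, q = n + 1 := ⟨q - 1, by omega⟩
  have hn : 0 < n := by omega
  have hq₁ : ((n + 1 : ℕ) : ℝ) - 1 = n := by push_cast; ring
  refine ⟨20 * n, 160 * n, by positivity, by positivity, ?_⟩
  intro X Y _ _ _ hX hY W hW hrow
  obtain ⟨y₁, y₂, hne, h₁, h₂, hD⟩ := exists_light_pair_sum_abs_sub_post_le hn hX hY W hW hrow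
  refine ⟨y₁, y₂, hne, h₁, h₂, hq₁ ▸ hD, sub_nonneg.mpr (symCap_mergeCh_le hW hne), ?_⟩
  have hlog : (1 : ℝ) / 2 < log 2 := by linarith [log_two_gt_d9]
  have hPY : (PY W y₁ + PY W y₂) / log 2 ≤ 8 / (Fintype.card Y : ℝ) := by
    rw [div_le_iff₀ (by positivity)]
    calc PY W y₁ + PY W y₂ ≤ 8 / (Fintype.card Y : ℝ) * (1 / 2) :=
          (add_le_add h₁ h₂).trans_eq (by ring)
      _ ≤ 8 / (Fintype.card Y : ℝ) * log 2 := by gcongr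
  have hexp : (1 / (Fintype.card Y : ℝ)) ^ (((n + 1 : ℕ) : ℝ) / n) =
      (1 / (Fintype.card Y : ℝ)) * (1 / (Fintype.card Y : ℝ)) ^ ((1 : ℝ) / n) := by
    rw [show ((n + 1 : ℕ) : ℝ) / n = 1 + 1 / n by field_simp; push_cast; ring,
      Real.rpow_add (by positivity), Real.rpow_one]
  calc symCap W - symCap (mergeCh W y₁ y₂)
      ≤ (PY W y₁ + PY W y₂) / log 2 * ∑ x, |post W y₁ x - post W y₂ x| :=
        symCap_sub_symCap_mergeCh_le hW hne
    _ ≤ 8 / (Fintype.card Y : ℝ) * (20 * n * (1 / (Fintype.card Y : ℝ)) ^ ((1 : ℝ) / n)) := by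
        gcongr
    _ = 160 * n * (1 / (Fintype.card Y : ℝ)) ^ (((n + 1 : ℕ) : ℝ) / (((n + 1 : ℕ) : ℝ) - 1)) := by
        rw [hq₁, hexp]; ring
end
end

section
/- Let W : X → Y be a DMC with |X| = q, |Y| = M, and suppose there exists a constant C(q) such that at each step one can merge a pair of output symbols of the current channel (of output size i) with capacity loss at most C(q)·(1/i)^{q/(q−1)}. Performing M − μ such merges in succession yields a channel T with output alphabet of size μ satisfying 0 ≤ I(W) − I(T) ≤ C(q) Σ_{i=μ+1}^{M} (1/i)^{q/(q−1)} = O((1/μ)^{1/(q−1)}). -/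
open Finset

noncomputable section

/-- Effective output alphabet size of a channel: the number of output symbols carrying
positive mass for some input. -/
def suppSize {X Y : Type*} (V : X → Y → ℝ) : ℕ :=
  Set.ncard {y : Y | ∃ x, V x y ≠ 0}

/-! The capacity losses of the successive merges add up along the chain, and the resulting sum
`Σ_{i>μ} (1/i)^{1+s}`, with `s = 1/(q-1)`, telescopes against `(1/i)^s`: the tangent-line
bound `s (1/(t+1))^{1+s} ≤ (1/t)^s - (1/(t+1))^s` is the discrete form of
`∫_μ^∞ x^{-(1+s)} dx = μ^{-s} / s`. -/

theorem exists_descent_of_step {α : Type*} (P : α → Prop) (n : α → ℕ) (f : α → ℝ)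
    (g : ℕ → ℝ) (μ : ℕ)
    (hstep : ∀ a, P a → μ < n a →
      ∃ a', P a' ∧ n a' = n a - 1 ∧ 0 ≤ f a - f a' ∧ f a - f a' ≤ g (n a))
    {a : α} (ha : P a) (hμ : μ ≤ n a) :
    ∃ b, P b ∧ n b = μ ∧ 0 ≤ f a - f b ∧ f a - f b ≤ ∑ i ∈ Icc (μ + 1) (n a), g i := by
  obtain ⟨k, hk⟩ : ∃ k, n a = k := ⟨_, rfl⟩
  rw [hk] at hμ ⊢
  induction k, hμ using Nat.le_induction generalizing a with
  | base => exact ⟨a, ha, hk, by simp, by simp⟩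
  | succ k hμk ih =>
    obtain ⟨a', ha', hna', hloss0, hloss⟩ := hstep a ha (by omega)
    obtain ⟨b, hb, hnb, hrest0, hrest⟩ := ih ha' (by omega)
    refine ⟨b, hb, hnb, by linarith, ?_⟩
    rw [hk] at hloss
    rw [sum_Icc_succ_top (by omega)]
    linarith

theorem mul_one_div_add_one_rpow_one_add_le {s t : ℝ} (hs0 : 0 < s) (hs1 : s ≤ 1) (ht : 0 < t) :
    s * (1 / (t + 1)) ^ (1 + s) ≤ (1 / t) ^ s - (1 / (t + 1)) ^ s := by
  set u := 1 / (t + 1)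
  set v := 1 / t
  have hu0 : 0 < u := by positivity
  have hu1 : u ≤ 1 := div_le_one_of_le₀ (by linarith) (by positivity)
  have huv : u = v * (1 - u) := by simp only [u, v]; field_simp; ring
  have hbern : (1 - u) ^ s ≤ 1 - s * u := by
    simpa [sub_eq_add_neg] using
      rpow_one_add_le_one_add_mul_self (by linarith : -1 ≤ -u) hs0.le hs1
  have hus : u ^ s = v ^ s * (1 - u) ^ s := by
    conv_lhs => rw [huv]
    exact Real.mul_rpow (by positivity) (by linarith)
  have hvs : 0 ≤ v ^ s := by positivity
  have key : u ^ s * (1 + s * u) ≤ v ^ s := calc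
    u ^ s * (1 + s * u) = v ^ s * ((1 - u) ^ s * (1 + s * u)) := by rw [hus]; ring
    _ ≤ v ^ s * ((1 - s * u) * (1 + s * u)) := by gcongr
    _ = v ^ s * (1 - (s * u) ^ 2) := by ring
    _ ≤ v ^ s := mul_le_of_le_one_right hvs (by linarith [sq_nonneg (s * u)])
  rw [Real.rpow_add hu0, Real.rpow_one]
  linarith

theorem mul_sum_Icc_one_div_rpow_one_add_le {s : ℝ} (hs0 : 0 < s) (hs1 : s ≤ 1) {μ M : ℕ}
    (hμ : 0 < μ) (hμM : μ ≤ M) :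
    s * ∑ i ∈ Icc (μ + 1) M, (1 / (i : ℝ)) ^ (1 + s) ≤
      (1 / (μ : ℝ)) ^ s - (1 / (M : ℝ)) ^ s := by
  induction M, hμM using Nat.le_induction with
  | base => simp
  | succ k hμk ih =>
    have hstep := mul_one_div_add_one_rpow_one_add_le hs0 hs1
      (Nat.cast_pos.mpr (hμ.trans_le hμk) : (0 : ℝ) < k)
    rw [sum_Icc_succ_top (by omega), mul_add]
    push_cast
    linarith

theorem sum_Icc_one_div_rpow_one_add_le {s : ℝ} (hs0 : 0 < s) (hs1 : s ≤ 1) {μ M : ℕ}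
    (hμ : 0 < μ) (hμM : μ ≤ M) :
    ∑ i ∈ Icc (μ + 1) M, (1 / (i : ℝ)) ^ (1 + s) ≤ s⁻¹ * (1 / (μ : ℝ)) ^ s := by
  rw [← div_eq_inv_mul, le_div_iff₀ hs0, mul_comm]
  have : 0 ≤ (1 / (M : ℝ)) ^ s := by positivity
  linarith [mul_sum_Icc_one_div_rpow_one_add_le hs0 hs1 hμ hμM]

theorem successive_degrading_bound_general {X Y : Type*} [Fintype X] [Fintype Y]
    (q μ M : ℕ) (hq : 2 ≤ q) (hμ : 1 ≤ μ) (hμM : μ ≤ M)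
    (W : X → Y → ℝ) (hW0 : ∀ x y, 0 ≤ W x y) (hW1 : ∀ x, ∑ y : Y, W x y = 1)
    (hM : suppSize W = M) (C : ℝ) (hC : 0 ≤ C)
    (hmerge : ∀ V : X → Y → ℝ, (∀ x y, 0 ≤ V x y) → (∀ x, ∑ y : Y, V x y = 1) →
      μ < suppSize V →
      ∃ V' : X → Y → ℝ, (∀ x y, 0 ≤ V' x y) ∧ (∀ x, ∑ y : Y, V' x y = 1) ∧
        suppSize V' = suppSize V - 1 ∧
        0 ≤ symCap V - symCap V' ∧
        symCap V - symCap V' ≤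
          C * (1 / (suppSize V : ℝ)) ^ ((q : ℝ) / ((q : ℝ) - 1))) :
    ∃ T : X → Y → ℝ, (∀ x y, 0 ≤ T x y) ∧ (∀ x, ∑ y : Y, T x y = 1) ∧
      suppSize T = μ ∧
      0 ≤ symCap W - symCap T ∧
      symCap W - symCap T ≤
        C * ∑ i ∈ Finset.Icc (μ + 1) M, (1 / (i : ℝ)) ^ ((q : ℝ) / ((q : ℝ) - 1)) ∧
      C * (∑ i ∈ Finset.Icc (μ + 1) M, (1 / (i : ℝ)) ^ ((q : ℝ) / ((q : ℝ) - 1))) ≤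
        C * ((q : ℝ) - 1) * (1 / (μ : ℝ)) ^ ((1 : ℝ) / ((q : ℝ) - 1)) := by
  obtain ⟨T, ⟨hT0, hT1⟩, hTμ, hloss0, hloss⟩ :=
    exists_descent_of_step (fun V : X → Y → ℝ ↦ (∀ x y, 0 ≤ V x y) ∧ ∀ x, ∑ y, V x y = 1)
      suppSize symCap (fun i ↦ C * (1 / (i : ℝ)) ^ ((q : ℝ) / ((q : ℝ) - 1))) μ
      (fun V ⟨hV0, hV1⟩ hlt ↦ by
        obtain ⟨V', hV'0, hV'1, hV'⟩ := hmerge V hV0 hV1 hlt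
        exact ⟨V', ⟨hV'0, hV'1⟩, hV'⟩)
      ⟨hW0, hW1⟩ (hM ▸ hμM)
  rw [hM, ← mul_sum] at hloss
  refine ⟨T, hT0, hT1, hTμ, hloss0, hloss, ?_⟩
  have hq1 : (1 : ℝ) ≤ (q : ℝ) - 1 := by
    have : (2 : ℝ) ≤ q := by exact_mod_cast hq
    linarith
  have hexp : (q : ℝ) / ((q : ℝ) - 1) = 1 + 1 / ((q : ℝ) - 1) := by
    field_simp
    ring
  have hsum := sum_Icc_one_div_rpow_one_add_le (by positivity)
    (div_le_one_of_le₀ hq1 (by linarith)) hμ hμM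
  rw [← hexp, inv_div, div_one] at hsum
  rw [mul_assoc]
  exact mul_le_mul_of_nonneg_left hsum hC

/-- If from every channel with more than `μ` (effective) output symbols one can merge a
pair of output symbols of the current channel (of output size `i`) losing at most
`C(q)·(1/i)^{q/(q−1)}` of capacity, then `M − μ` successive merges yield a channel `T`
with `μ` output symbols and
`0 ≤ I(W) − I(T) ≤ C(q) Σ_{i=μ+1}^M (1/i)^{q/(q−1)} = O((1/μ)^{1/(q−1)})`. -/
theorem successive_degrading_bound {X Y : Type*} [Fintype X] [Fintype Y]
    (q μ M : ℕ) (hq : 2 ≤ q) (hX : Fintype.card X = q) (hμ : 1 ≤ μ) (hμM : μ ≤ M)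
    (W : X → Y → ℝ) (hW0 : ∀ x y, 0 ≤ W x y) (hW1 : ∀ x, ∑ y : Y, W x y = 1)
    (hM : suppSize W = M) (C : ℝ) (hC : 0 ≤ C)
    (hmerge : ∀ V : X → Y → ℝ, (∀ x y, 0 ≤ V x y) → (∀ x, ∑ y : Y, V x y = 1) →
      μ < suppSize V →
      ∃ V' : X → Y → ℝ, (∀ x y, 0 ≤ V' x y) ∧ (∀ x, ∑ y : Y, V' x y = 1) ∧
        suppSize V' = suppSize V - 1 ∧
        0 ≤ symCap V - symCap V' ∧
        symCap V - symCap V' ≤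
          C * (1 / (suppSize V : ℝ)) ^ ((q : ℝ) / ((q : ℝ) - 1))) :
    ∃ T : X → Y → ℝ, (∀ x y, 0 ≤ T x y) ∧ (∀ x, ∑ y : Y, T x y = 1) ∧
      suppSize T = μ ∧
      0 ≤ symCap W - symCap T ∧
      symCap W - symCap T ≤
        C * ∑ i ∈ Finset.Icc (μ + 1) M, (1 / (i : ℝ)) ^ ((q : ℝ) / ((q : ℝ) - 1)) ∧
      C * (∑ i ∈ Finset.Icc (μ + 1) M, (1 / (i : ℝ)) ^ ((q : ℝ) / ((q : ℝ) - 1))) ≤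
        C * ((q : ℝ) - 1) * (1 / (μ : ℝ)) ^ ((1 : ℝ) / ((q : ℝ) - 1)) :=
  successive_degrading_bound_general q μ M hq hμ hμM W hW0 hW1 hM C hC hmerge
end
end

section
/- Let X = ℤ/qℤ and P_{XY1}, Q_{XY2} be joint distributions with X uniform. Suppose y1, y2, z1, z2 satisfy: there exist x1, x2 ∈ X with P_{X|Y1}(x ⊕ x1 | y1) = Q_{X|Y2}(x | z1) and P_{X|Y1}(x ⊕ x2 | y2) = Q_{X|Y2}(x | z2) for all x. Then the minus-transform posteriors are cyclic shifts of each other: Q^−_{X|Y2^−}(x | (z1,z2)) = P^−_{X|Y1^−}(x ⊕ (x1 ⊖ x2) | (y1,y2)) for all x ∈ X, where P^−_{X|Y^−}(x|(y,y')) = Σ_{u} P_{X|Y}(x ⊕ u | y) P_{X|Y}(u | y'). -/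
open Finset

noncomputable section

/-- Posterior distribution of `X` given `Y = y` for a joint distribution `P`. -/
def postJ {X Y : Type*} [Fintype X] (P : X → Y → ℝ) (y : Y) (x : X) : ℝ :=
  P x y / ∑ x0 : X, P x0 y

/-- Minus-transform posterior:
`P^−(x | (y,y')) = Σ_u P_{X|Y}(x ⊕ u | y) P_{X|Y}(u | y')`. -/
def minusPost {q : ℕ} [NeZero q] {Y : Type*} (P : ZMod q → Y → ℝ)
    (y y' : Y) (x : ZMod q) : ℝ :=
  ∑ u : ZMod q, postJ P y (x + u) * postJ P y' u

/-- If the posteriors at `y1, y2` are cyclic shifts (by `x1, x2`) of the posteriors at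
`z1, z2`, then the minus-transform posteriors are cyclic shifts of each other (by
`x1 ⊖ x2`). -/
theorem minusPost_cyclic_shift (q : ℕ) [NeZero q] {Y1 Y2 : Type*}
    [Fintype Y1] [Fintype Y2]
    (P : ZMod q → Y1 → ℝ) (Q : ZMod q → Y2 → ℝ)
    (hP0 : ∀ x y, 0 ≤ P x y) (hQ0 : ∀ x y, 0 ≤ Q x y)
    (hPunif : ∀ x, ∑ y : Y1, P x y = 1 / (q : ℝ))
    (hQunif : ∀ x, ∑ y : Y2, Q x y = 1 / (q : ℝ))
    (y1 y2 : Y1) (z1 z2 : Y2) (x1 x2 : ZMod q)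
    (h1 : ∀ x : ZMod q, postJ P y1 (x + x1) = postJ Q z1 x)
    (h2 : ∀ x : ZMod q, postJ P y2 (x + x2) = postJ Q z2 x) :
    ∀ x : ZMod q, minusPost Q z1 z2 x = minusPost P y1 y2 (x + (x1 - x2)) := by
  intro x
  unfold minusPost
  rw [← Equiv.sum_comp (Equiv.subRight x2)]
  apply Finset.sum_congr rfl
  intro u _
  simp only [Equiv.subRight_apply]
  rw [← h1 (x + (u - x2)), ← h2 (u - x2)]
  ring_nf
end
end

section
/- Let X = ℤ/qℤ and P a joint distribution on X × Y with X uniform. Suppose y1, z1, y2, z2 ∈ Y and x1, x2, x3, x4 ∈ X satisfy P_{X|Y}(x ⊕ x1 | z1) = P_{X|Y}(x | y1), P_{X|Y}(x ⊕ x2 | z2) = P_{X|Y}(x | y2) for all x. Then for all u, x ∈ X the plus-transform posteriors satisfy P^+_{X|Y^+}(x | (−x1 ⊕ x2 ⊕ u, y1, y2)) = P^+_{X|Y^+}(x ⊕ x2 | (u, z1, z2)), where P^+_{X|Y^+}(x|(u1,y,y')) = P_{X|Y}(u1 ⊕ x | y) P_{X|Y}(x | y') / Σ_{x0} P_{X|Y}(u1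 ⊕ x0 | y) P_{X|Y}(x0 | y'), assuming all denominators are positive. -/
open Finset

noncomputable section

/-- Plus-transform posterior:
`P^+(x | (u1,y,y')) = P(u1⊕x|y)P(x|y') / Σ_{x0} P(u1⊕x0|y)P(x0|y')`. -/
def plusPost {q : ℕ} [NeZero q] {Y : Type*} (P : ZMod q → Y → ℝ)
    (u1 : ZMod q) (y y' : Y) (x : ZMod q) : ℝ :=
  postJ P y (u1 + x) * postJ P y' x /
    ∑ x0 : ZMod q, postJ P y (u1 + x0) * postJ P y' x0

/-- If the posteriors at `z1, z2` are cyclic shifts (by `x1, x2`) of those at `y1, y2`,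
then the plus-transform posteriors satisfy
`P^+(x | (−x1 ⊕ x2 ⊕ u, y1, y2)) = P^+(x ⊕ x2 | (u, z1, z2))`. -/
theorem plusPost_cyclic_shift_pairs (q : ℕ) [NeZero q] {Y : Type*} [Fintype Y]
    (P : ZMod q → Y → ℝ) (hP0 : ∀ x y, 0 ≤ P x y)
    (hunif : ∀ x, ∑ y : Y, P x y = 1 / (q : ℝ))
    (y1 y2 z1 z2 : Y) (x1 x2 : ZMod q)
    (h1 : ∀ x : ZMod q, postJ P z1 (x + x1) = postJ P y1 x)
    (h2 : ∀ x : ZMod q, postJ P z2 (x + x2) = postJ P y2 x)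
    (hd1 : ∀ u1 : ZMod q, 0 < ∑ x0 : ZMod q, postJ P y1 (u1 + x0) * postJ P y2 x0)
    (hd2 : ∀ u1 : ZMod q, 0 < ∑ x0 : ZMod q, postJ P z1 (u1 + x0) * postJ P z2 x0) :
    ∀ u x : ZMod q,
      plusPost P (-x1 + x2 + u) y1 y2 x = plusPost P u z1 z2 (x + x2) := by
  intro u x
  have key : ∀ a : ZMod q, postJ P z1 (a + x1) = postJ P y1 a := h1
  have hnum : postJ P y1 (-x1 + x2 + u + x) * postJ P y2 x
      = postJ P z1 (u + (x + x2)) * postJ P z2 (x + x2) := by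
    rw [← h1 (-x1 + x2 + u + x), ← h2 x]
    ring_nf
  have hden : (∑ x0 : ZMod q, postJ P y1 (-x1 + x2 + u + x0) * postJ P y2 x0)
      = ∑ x0 : ZMod q, postJ P z1 (u + x0) * postJ P z2 x0 := by
    refine Fintype.sum_equiv (Equiv.addRight x2) _ _ (fun x0 => ?_)
    simp only [Equiv.coe_addRight]
    rw [← h1 (-x1 + x2 + u + x0), ← h2 x0]
    ring_nf
  unfold plusPost
  rw [hnum, hden]
end
end

section
/- Let X = ℤ/qℤ, P a joint distribution on X × Y with X uniform and Y finite, and fix z1, z2 ∈ Y with positive P_Y probability. Let A, B ⊆ Y be such that for each y1 ∈ A there is x1(y1) with P_{X|Y}(x ⊕ x1(y1)|z1) = P_{X|Y}(x|y1) for all x, and for each y2 ∈ B there is x2(y2) with P_{X|Y}(x ⊕ x2(y2)|z2) = P_{X|Y}(x|y2) for all x. For y1 ∈ A, y2 ∈ B set π_{y1,y2}(u) = −x1(y1) ⊕ u ⊕ x2(y2). Then for every u ∈ X, Σ_{y1∈A, y2∈B} P^+_{Y^+}((π_{y1,y2}(u), y1, y2)) = (Σ_{x∈X} P_{X|Y}(u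 ⊕ x | z1) P_{X|Y}(x | z2)) · P_Y(A) · P_Y(B), where P^+_{Y^+}((u1,y,y')) = (Σ_x P_{X|Y}(u1 ⊕ x|y) P_{X|Y}(x|y')) P_Y(y) P_Y(y'). -/
open Finset

noncomputable section

/-- Marginal of `Y` for a joint distribution `P` on `X × Y`. -/
def PYj {X Y : Type*} [Fintype X] (P : X → Y → ℝ) (y : Y) : ℝ :=
  ∑ x : X, P x y

/-- Output distribution of the synthesized `+` channel:
`P^+((u1,y,y')) = (Σ_x P(u1⊕x|y) P(x|y')) P_Y(y) P_Y(y')`. -/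
def plusOut {q : ℕ} [NeZero q] {Y : Type*} [Fintype Y] (P : ZMod q → Y → ℝ)
    (u1 : ZMod q) (y y' : Y) : ℝ :=
  (∑ x : ZMod q, postJ P y (u1 + x) * postJ P y' x) * PYj P y * PYj P y'

/-- Condition (1) for the `+` case: summing the `+`-channel output probabilities over
the matched outputs `(π_{y1,y2}(u), y1, y2)`, `y1 ∈ A`, `y2 ∈ B`, with
`π_{y1,y2}(u) = −x1(y1) ⊕ u ⊕ x2(y2)`, factorizes as
`(Σ_x P(u⊕x|z1)P(x|z2)) · P_Y(A) · P_Y(B)`. -/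
theorem plus_output_prob_factorizes (q : ℕ) [NeZero q] {Y : Type*} [Fintype Y]
    (P : ZMod q → Y → ℝ) (hP0 : ∀ x y, 0 ≤ P x y)
    (hunif : ∀ x, ∑ y : Y, P x y = 1 / (q : ℝ))
    (z1 z2 : Y) (hz1 : 0 < PYj P z1) (hz2 : 0 < PYj P z2)
    (A B : Finset Y) (x1 x2 : Y → ZMod q)
    (hA : ∀ y1 ∈ A, ∀ x : ZMod q, postJ P z1 (x + x1 y1) = postJ P y1 x)
    (hB : ∀ y2 ∈ B, ∀ x : ZMod q, postJ P z2 (x + x2 y2) = postJ P y2 x) :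
    ∀ u : ZMod q,
      ∑ y1 ∈ A, ∑ y2 ∈ B, plusOut P (-(x1 y1) + u + x2 y2) y1 y2 =
        (∑ x : ZMod q, postJ P z1 (u + x) * postJ P z2 x) *
          (∑ y ∈ A, PYj P y) * (∑ y ∈ B, PYj P y) := by
  intro u
  have key : ∀ y1 ∈ A, ∀ y2 ∈ B,
      plusOut P (-(x1 y1) + u + x2 y2) y1 y2 =
      (∑ x : ZMod q, postJ P z1 (u + x) * postJ P z2 x) * PYj P y1 * PYj P y2 := by
    intro y1 h1 y2 h2
    unfold plusOut
    congr 2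
    have h : (∑ x : ZMod q, postJ P y1 (-(x1 y1) + u + x2 y2 + x) * postJ P y2 x) =
        ∑ x : ZMod q, postJ P z1 (u + (x + x2 y2)) * postJ P z2 (x + x2 y2) := by
      refine Finset.sum_congr rfl fun x _ => ?_
      rw [← hA y1 h1, ← hB y2 h2]
      congr 1
      ring
    rw [h]
    exact Equiv.sum_comp (Equiv.addRight (x2 y2))
      (fun x => postJ P z1 (u + x) * postJ P z2 x)
  set S := ∑ x : ZMod q, postJ P z1 (u + x) * postJ P z2 x with hS
  calc ∑ y1 ∈ A, ∑ y2 ∈ B, plusOut P (-(x1 y1) + u + x2 y2) y1 y2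
      = ∑ y1 ∈ A, ∑ y2 ∈ B, S * PYj P y1 * PYj P y2 :=
        Finset.sum_congr rfl fun y1 h1 => Finset.sum_congr rfl fun y2 h2 => key y1 h1 y2 h2
    _ = S * (∑ y ∈ A, PYj P y) * (∑ y ∈ B, PYj P y) := by
        rw [mul_assoc, Finset.sum_mul_sum, Finset.mul_sum]
        refine Finset.sum_congr rfl fun y1 _ => ?_
        rw [Finset.mul_sum]
        exact Finset.sum_congr rfl fun y2 _ => by ring
end
end
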